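/- In adaptive gradient descent-2, if θ_k < 1/3 then the second stepsize bound is active at step k (i.e., α_k = α_{k-1}/√(2α_{k-1}²L_k² - 1)) and moreover α_{k-1}L_k > √5, α_{k-2}L_k ≥ 3/2, and α_{k-3}L_k ≥ 1. -/
import Mathlib


/-- Stepsize rule of adaptive gradient descent-2:
`α_k = min{√(2/3+θ_{k-1})·α_{k-1}, α_{k-1}/√([2α_{k-1}²L_k²-1]_+)}`,
with the convention `a/0 = +∞` (when the bracket is nonpositive
the second bound is inactive). -/
noncomputable def adgd2Step (αp θp Lk : ℝ) : ℝ :=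
  if 2 * αp ^ 2 * Lk ^ 2 - 1 ≤ 0 then Real.sqrt (2 / 3 + θp) * αp
  else min (Real.sqrt (2 / 3 + θp) * αp) (αp / Real.sqrt (2 * αp ^ 2 * Lk ^ 2 - 1))

lemma adgd2Step_le (αp θp Lk : ℝ) :
    adgd2Step αp θp Lk ≤ Real.sqrt (2 / 3 + θp) * αp := by
  unfold adgd2Step
  split
  · exact le_rfl
  · exact min_le_left _ _

lemma sqrt_twenty_ninths : Real.sqrt (20 / 9) = 2 / 3 * Real.sqrt 5 := by
  rw [show (20 : ℝ) / 9 = (2 / 3) ^ 2 * 5 by norm_num,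
    Real.sqrt_mul (by positivity), Real.sqrt_sq (by norm_num)]

set_option maxHeartbeats 1000000 in
theorem adgd2_small_theta (α θ L : ℕ → ℝ)
    (hαpos : ∀ k, 0 < α k) (hLnn : ∀ k ≥ 1, 0 ≤ L k)
    (hθ0 : θ 0 ≤ 1)
    (hα : ∀ j ≥ 1, α j = adgd2Step (α (j - 1)) (θ (j - 1)) (L j))
    (hθ : ∀ j ≥ 1, θ j = α j / α (j - 1))
    (k : ℕ) (hk : 3 ≤ k) (hsmall : θ k < 1 / 3) :
    α k = α (k - 1) / Real.sqrt (2 * (α (k - 1)) ^ 2 * (L k) ^ 2 - 1) ∧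
      α (k - 1) * L k > Real.sqrt 5 ∧
      α (k - 2) * L k ≥ 3 / 2 ∧
      α (k - 3) * L k ≥ 1 := by
  -- the invariant θ_j ≤ 14/9
  have hθbd : ∀ j, θ j ≤ 14 / 9 := by
    intro j
    induction j with
    | zero => linarith
    | succ n ih =>
      have h1 : α (n + 1) = adgd2Step (α n) (θ n) (L (n + 1)) := by
        simpa using hα (n + 1) (by omega)
      have h2 : θ (n + 1) = α (n + 1) / α n := by
        simpa using hθ (n + 1) (by omega)
      have hle : α (n + 1) ≤ Real.sqrt (2 / 3 + θ n) * α n :=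
        h1 ▸ adgd2Step_le _ _ _
      have hs : Real.sqrt (2 / 3 + θ n) ≤ 14 / 9 := by
        have := Real.sqrt_le_sqrt (show 2 / 3 + θ n ≤ ((14 : ℝ) / 9) ^ 2 by nlinarith)
        rwa [Real.sqrt_sq (by norm_num)] at this
      have hpos := hαpos n
      rw [h2, div_le_iff₀ hpos]
      calc α (n + 1) ≤ Real.sqrt (2 / 3 + θ n) * α n := hle
        _ ≤ 14 / 9 * α n := mul_le_mul_of_nonneg_right hs hpos.le
  obtain ⟨m, rfl⟩ : ∃ m, k = m + 3 := ⟨k - 3, by omega⟩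
  have e1 : m + 3 - 1 = m + 2 := rfl
  have e2 : m + 3 - 2 = m + 1 := rfl
  have e3 : m + 3 - 3 = m := rfl
  rw [e1, e2, e3]
  set a1 := α (m + 2) with ha1
  set a2 := α (m + 1) with ha2
  set a3 := α m with ha3
  set Lk := L (m + 3) with hLk
  have ha1p : 0 < a1 := hαpos _
  have ha2p : 0 < a2 := hαpos _
  have ha3p : 0 < a3 := hαpos _
  have hLknn : 0 ≤ Lk := hLnn (m + 3) (by omega)
  have hαk : α (m + 3) = adgd2Step a1 (θ (m + 2)) Lk := by
    simpa [e1] using hα (m + 3) (by omega)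
  have hθk : θ (m + 3) = α (m + 3) / a1 := by
    simpa [e1] using hθ (m + 3) (by omega)
  -- α_k < a1 / 3
  have hαk_lt : α (m + 3) < a1 / 3 := by
    have := hsmall
    rw [hθk, div_lt_iff₀ ha1p] at this
    linarith
  -- θ (m+2) > 0
  have hθ2pos : 0 < θ (m + 2) := by
    have h2 : θ (m + 2) = α (m + 2) / α (m + 1) := by
      simpa using hθ (m + 2) (by omega)
    rw [h2]; positivity
  -- first bound is > a1 / 3
  have hfirst : a1 / 3 < Real.sqrt (2 / 3 + θ (m + 2)) * a1 := by
    have hs : (1 / 3 : ℝ) < Real.sqrt (2 / 3 + θ (m + 2)) := by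
      have := Real.sqrt_lt_sqrt (by positivity : (0:ℝ) ≤ (1/3)^2)
        (show ((1:ℝ)/3)^2 < 2 / 3 + θ (m + 2) by nlinarith)
      rwa [Real.sqrt_sq (by norm_num)] at this
    nlinarith
  -- branch analysis
  have hbr : ¬ (2 * a1 ^ 2 * Lk ^ 2 - 1 ≤ 0) := by
    intro h
    rw [adgd2Step, if_pos h] at hαk
    linarith [hαk ▸ hαk_lt]
  rw [adgd2Step, if_neg hbr] at hαk
  have hmin : α (m + 3) = a1 / Real.sqrt (2 * a1 ^ 2 * Lk ^ 2 - 1) := by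
    rcases min_cases (Real.sqrt (2 / 3 + θ (m + 2)) * a1)
      (a1 / Real.sqrt (2 * a1 ^ 2 * Lk ^ 2 - 1)) with ⟨h, _⟩ | ⟨h, _⟩
    · exfalso; rw [hαk, h] at hαk_lt; linarith
    · rw [hαk, h]
  have hb : (0:ℝ) < 2 * a1 ^ 2 * Lk ^ 2 - 1 := by linarith [not_le.mp hbr]
  have hsb : 0 < Real.sqrt (2 * a1 ^ 2 * Lk ^ 2 - 1) := Real.sqrt_pos.mpr hb
  -- √(bracket) > 3
  have h3 : (3:ℝ) < Real.sqrt (2 * a1 ^ 2 * Lk ^ 2 - 1) := by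
    have := hmin ▸ hαk_lt
    rw [div_lt_div_iff₀ hsb (by norm_num : (0:ℝ) < 3)] at this
    nlinarith
  have hbgt : (9:ℝ) < 2 * a1 ^ 2 * Lk ^ 2 - 1 := by
    have := Real.sq_sqrt hb.le
    nlinarith
  -- a1 * Lk > √5
  have hgt5 : Real.sqrt 5 < a1 * Lk := by
    have h : (5:ℝ) < (a1 * Lk) ^ 2 := by nlinarith
    have := Real.sqrt_lt_sqrt (by norm_num : (0:ℝ) ≤ 5) h
    rwa [Real.sqrt_sq (by positivity)] at this
  -- cascading bound: α_{j+1} ≤ (2√5/3) α_j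
  have hstep : ∀ j : ℕ, α (j + 1) ≤ 2 / 3 * Real.sqrt 5 * α j := by
    intro j
    have h1 : α (j + 1) = adgd2Step (α j) (θ j) (L (j + 1)) := by
      simpa using hα (j + 1) (by omega)
    have hle : α (j + 1) ≤ Real.sqrt (2 / 3 + θ j) * α j := h1 ▸ adgd2Step_le _ _ _
    have hs : Real.sqrt (2 / 3 + θ j) ≤ 2 / 3 * Real.sqrt 5 := by
      rw [← sqrt_twenty_ninths]
      exact Real.sqrt_le_sqrt (by linarith [hθbd j])
    calc α (j + 1) ≤ Real.sqrt (2 / 3 + θ j) * α j := hle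
      _ ≤ 2 / 3 * Real.sqrt 5 * α j := mul_le_mul_of_nonneg_right hs (hαpos j).le
  have hs5pos : (0:ℝ) < Real.sqrt 5 := Real.sqrt_pos.mpr (by norm_num)
  have hs5le : Real.sqrt 5 ≤ 9 / 4 := by
    have := Real.sqrt_le_sqrt (show (5:ℝ) ≤ (9/4)^2 by norm_num)
    rwa [Real.sqrt_sq (by norm_num)] at this
  -- a2 * Lk ≥ 3/2
  have h12 : a1 ≤ 2 / 3 * Real.sqrt 5 * a2 := hstep (m + 1)
  have ha2L : (3:ℝ) / 2 < a2 * Lk := by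
    have hm : a1 * Lk ≤ 2 / 3 * Real.sqrt 5 * a2 * Lk :=
      mul_le_mul_of_nonneg_right h12 hLknn
    have hx : Real.sqrt 5 * 1 < Real.sqrt 5 * (2 / 3 * (a2 * Lk)) := by
      have : 2 / 3 * Real.sqrt 5 * a2 * Lk = Real.sqrt 5 * (2 / 3 * (a2 * Lk)) := by ring
      rw [mul_one]; linarith [this ▸ hm]
    have := (mul_lt_mul_iff_right₀ hs5pos).mp hx
    linarith
  -- a3 * Lk ≥ 1
  have h23 : a2 ≤ 2 / 3 * Real.sqrt 5 * a3 := hstep m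
  have ha3L : (1:ℝ) ≤ a3 * Lk := by
    have hm : a2 * Lk ≤ 2 / 3 * Real.sqrt 5 * a3 * Lk :=
      mul_le_mul_of_nonneg_right h23 hLknn
    have hynn : 0 ≤ a3 * Lk := mul_nonneg ha3p.le hLknn
    have hup : Real.sqrt 5 * (a3 * Lk) ≤ 9 / 4 * (a3 * Lk) :=
      mul_le_mul_of_nonneg_right hs5le hynn
    have he : 2 / 3 * Real.sqrt 5 * a3 * Lk = 2 / 3 * (Real.sqrt 5 * (a3 * Lk)) := by ring
    rw [he] at hm
    linarith
  exact ⟨hmin, hgt5, ha2L.le, ha3L⟩
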